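/- arXiv:2510.22586 — 4 statements merged into one kernel-verified Lean document; each statement's English description precedes it below -/
import Mathlib

section
/- Let h1,…,hT be convex differentiable functions on a bounded convex set D ⊂ ℝ^d with diameter R_D. The AdaGrad iterates u_{t+1} = Π_D(u_t − γ_t ∇h_t(u_t)) with γ_t = R_D (2 Σ_{s=1}^t ‖∇h_s(u_s)‖²)^{−1/2} satisfy, for every u* ∈ D and any u_1 ∈ D, the regret bound Σ_{t=1}^T (h_t(u_t) − h_t(u*)) ≤ R_D √(2 Σ_{t=1}^T ‖∇h_t(u_t)‖²). -/
/-!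
Convexity bounds the regret by the linearized regret `∑ ⟪g_t, u_t - u*⟫`, where `g_t = ∇h_t(u_t)`.
Projection onto `D` does not increase distances to points of `D`, so each step gives
`⟪g_t, u_t - u*⟫ ≤ (‖u_t - u*‖² - ‖u_{t+1} - u*‖²) / (2γ_t) + γ_t ‖g_t‖² / 2`.
Since `1/γ_t` increases and `‖u_t - u*‖ ≤ R_D`, Abel summation bounds the first terms by
`R_D² / (2γ_T) = R_D √(2 S_T) / 2` (with `S_t = ∑_{s ≤ t} ‖g_s‖²`), and
`∑ ‖g_t‖² / √(2 S_t) ≤ √(2 S_T)` bounds the second ones by the same amount.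
-/

open Finset
open scoped RealInnerProductSpace

theorem div_sqrt_two_mul_add_le {S a : ℝ} (hS : 0 ≤ S) (ha : 0 ≤ a) :
    a / √(2 * (S + a)) ≤ √(2 * (S + a)) - √(2 * S) := by
  set X := √(2 * (S + a))
  set Y := √(2 * S)
  have hX : X ^ 2 = 2 * (S + a) := Real.sq_sqrt (by positivity)
  have hY : Y ^ 2 = 2 * S := Real.sq_sqrt (by positivity)
  have hYX : Y ≤ X := Real.sqrt_le_sqrt (by linarith)
  rcases (show 0 ≤ X from Real.sqrt_nonneg _).eq_or_lt with hX0 | hXpos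
  · rw [← hX0, div_zero]; linarith
  · rw [div_le_iff₀ hXpos]
    nlinarith [Real.sqrt_nonneg (2 * S)]

theorem sum_range_div_sqrt_two_mul_le {x : ℕ → ℝ} (hx : ∀ t, 0 ≤ x t) (n : ℕ) :
    ∑ t ∈ range n, x t / √(2 * ∑ s ∈ range (t + 1), x s) ≤ √(2 * ∑ t ∈ range n, x t) := by
  induction n with
  | zero => simp
  | succ n ih =>
    have hstep := div_sqrt_two_mul_add_le (S := ∑ t ∈ range n, x t)
      (sum_nonneg fun t _ => hx t) (hx n)
    rw [← sum_range_succ] at hstep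
    rw [sum_range_succ]
    linarith

theorem sum_range_mul_sub_succ_add_le {a b : ℕ → ℝ} {B : ℝ} (ha : Monotone a) (ha0 : 0 ≤ a 0)
    (hb : ∀ t, b t ≤ B) (n : ℕ) :
    ∑ t ∈ range n, a (t + 1) * (b t - b (t + 1)) + a n * b n ≤ a n * B := by
  induction n with
  | zero => simpa using mul_le_mul_of_nonneg_left (hb 0) ha0
  | succ n ih =>
    rw [sum_range_succ]
    nlinarith [mul_le_mul_of_nonneg_left (hb n) (sub_nonneg.2 (ha n.le_succ))]

section InnerProductSpace

variable {E : Type*} [NormedAddCommGroup E] [InnerProductSpace ℝ E]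

theorem ConvexOn.inner_gradient_le_sub [CompleteSpace E] {D : Set E} {f : E → ℝ} {g x y : E}
    (hf : ConvexOn ℝ D f) (hx : x ∈ D) (hy : y ∈ D) (hg : HasGradientAt f g x) :
    ⟪g, y - x⟫ ≤ f y - f x := by
  set ℓ : ℝ →ᵃ[ℝ] E := AffineMap.lineMap x y
  have hderiv : HasDerivAt (f ∘ ℓ) ⟪g, y - x⟫ 0 := by
    have hℓ : HasDerivAt ℓ (y - x) 0 := AffineMap.hasDerivAt_lineMap
    simpa using hg.hasFDerivAt.comp_hasDerivAt_of_eq 0 hℓ (by simp [ℓ])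
  have hline : ConvexOn ℝ (ℓ ⁻¹' D) (f ∘ ℓ) := hf.comp_affineMap ℓ
  simpa [slope_def_field, ℓ] using
    hline.le_slope_of_hasDerivAt (by simpa [ℓ] using hx) (by simpa [ℓ] using hy) zero_lt_one
      hderiv

theorem norm_sub_le_of_forall_norm_sub_le {D : Set E} (hD : Convex ℝ D) {p v u : E}
    (hp : p ∈ D) (hmin : ∀ w ∈ D, ‖p - v‖ ≤ ‖w - v‖) (hu : u ∈ D) :
    ‖p - u‖ ≤ ‖v - u‖ := by
  have : Nonempty D := ⟨⟨p, hp⟩⟩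
  have hinner : ⟪v - p, u - p⟫ ≤ 0 := by
    refine (norm_eq_iInf_iff_real_inner_le_zero hD hp).mp (le_antisymm ?_ ?_) u hu
    · exact le_ciInf fun w => by simpa only [norm_sub_rev] using hmin w w.2
    · exact ciInf_le ⟨0, by rintro _ ⟨w, rfl⟩; positivity⟩ (⟨p, hp⟩ : D)
  have hexpand : ‖v - u‖ ^ 2 = ‖v - p‖ ^ 2 - 2 * ⟪v - p, u - p⟫ + ‖p - u‖ ^ 2 := by
    rw [show v - u = (v - p) - (u - p) by abel, norm_sub_sq_real, norm_sub_rev u p]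
  exact (pow_le_pow_iff_left₀ (norm_nonneg _) (norm_nonneg _) two_ne_zero).mp
    (by nlinarith [sq_nonneg ‖v - p‖])

theorem inner_sub_le_of_projected_step {D : Set E} (hD : Convex ℝ D) {x g p y : E} {γ : ℝ}
    (hγ : 0 < γ) (hp : p ∈ D) (hmin : ∀ w ∈ D, ‖p - (x - γ • g)‖ ≤ ‖w - (x - γ • g)‖)
    (hy : y ∈ D) :
    ⟪g, x - y⟫ ≤ (‖x - y‖ ^ 2 - ‖p - y‖ ^ 2) / (2 * γ) + γ / 2 * ‖g‖ ^ 2 := by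
  have hcontract : ‖p - y‖ ^ 2 ≤ ‖(x - y) - γ • g‖ ^ 2 := by
    rw [show (x - y) - γ • g = (x - γ • g) - y by abel]
    exact pow_le_pow_left₀ (norm_nonneg _) (norm_sub_le_of_forall_norm_sub_le hD hp hmin hy) 2
  rw [norm_sub_sq_real (x - y) (γ • g), real_inner_smul_right, norm_smul,
    Real.norm_of_nonneg hγ.le, real_inner_comm] at hcontract
  rw [div_add' _ _ _ (by positivity), le_div_iff₀ (by positivity)]
  nlinarith

theorem inner_sub_le_of_adagrad_step {D : Set E} (hD : Convex ℝ D) {x g p y : E} {R σ : ℝ}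
    (hR : 0 < R) (hσ : 0 ≤ σ) (hg : σ = 0 → g = 0) (hp : p ∈ D)
    (hmin : ∀ w ∈ D, ‖p - (x - (R / σ) • g)‖ ≤ ‖w - (x - (R / σ) • g)‖) (hy : y ∈ D) :
    ⟪g, x - y⟫ ≤ σ / (2 * R) * (‖x - y‖ ^ 2 - ‖p - y‖ ^ 2) + R / 2 * (‖g‖ ^ 2 / σ) := by
  rcases hσ.eq_or_lt with rfl | hσ
  · -- `R / 0 = 0`, so no step is taken; the hypothesis `hg` makes both sides vanish.
    simp [hg rfl]
  calc ⟪g, x - y⟫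
      ≤ (‖x - y‖ ^ 2 - ‖p - y‖ ^ 2) / (2 * (R / σ)) + R / σ / 2 * ‖g‖ ^ 2 :=
        inner_sub_le_of_projected_step hD (div_pos hR hσ) hp hmin hy
    _ = σ / (2 * R) * (‖x - y‖ ^ 2 - ‖p - y‖ ^ 2) + R / 2 * (‖g‖ ^ 2 / σ) := by
        field_simp

theorem adagrad_inner_regret_le {D : Set E} (hD : Convex ℝ D) (hDb : Bornology.IsBounded D)
    {proj : E → E} (hproj : ∀ v, ∀ w ∈ D, ‖proj v - v‖ ≤ ‖w - v‖) {g u : ℕ → E}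
    (hu : ∀ t, u t ∈ D)
    (hupdate : ∀ t, u (t + 1) =
      proj (u t - (Metric.diam D / √(2 * ∑ s ∈ range (t + 1), ‖g s‖ ^ 2)) • g t))
    {y : E} (hy : y ∈ D) (T : ℕ) :
    ∑ t ∈ range T, ⟪g t, u t - y⟫ ≤ Metric.diam D * √(2 * ∑ t ∈ range T, ‖g t‖ ^ 2) := by
  set R := Metric.diam D
  have hdist (t : ℕ) : ‖u t - y‖ ≤ R := by
    simpa only [dist_eq_norm] using Metric.dist_le_diam_of_mem hDb (hu t) hy
  rcases (Metric.diam_nonneg : 0 ≤ R).eq_or_lt with hR | hR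
  · have hu_eq (t : ℕ) : u t = y := sub_eq_zero.mp (norm_le_zero_iff.mp (hR ▸ hdist t))
    simp only [hu_eq, sub_self, inner_zero_right, sum_const_zero]
    exact mul_nonneg Metric.diam_nonneg (Real.sqrt_nonneg _)
  set S : ℕ → ℝ := fun n => ∑ t ∈ range n, ‖g t‖ ^ 2
  set A : ℕ → ℝ := fun n => √(2 * S n) / (2 * R)
  have hA : Monotone A := monotone_nat_of_le_succ fun n => by
    simp only [A, S, sum_range_succ]
    gcongr
    exact le_add_of_nonneg_right (sq_nonneg _)
  have hstep (t : ℕ) : ⟪g t, u t - y⟫ ≤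
      A (t + 1) * (‖u t - y‖ ^ 2 - ‖u (t + 1) - y‖ ^ 2) +
        R / 2 * (‖g t‖ ^ 2 / √(2 * S (t + 1))) := by
    refine inner_sub_le_of_adagrad_step hD hR (Real.sqrt_nonneg _) (fun h0 => ?_) (hu (t + 1))
      ?_ hy
    · have hle : ‖g t‖ ^ 2 ≤ S (t + 1) :=
        single_le_sum (fun s _ => sq_nonneg ‖g s‖) (self_mem_range_succ t)
      have hS : 2 * S (t + 1) ≤ 0 := Real.sqrt_eq_zero'.mp h0
      exact norm_eq_zero.mp (pow_eq_zero_iff two_ne_zero |>.mp (by nlinarith [sq_nonneg ‖g t‖]))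
    · rw [hupdate t]; exact hproj _
  calc ∑ t ∈ range T, ⟪g t, u t - y⟫
      ≤ ∑ t ∈ range T, (A (t + 1) * (‖u t - y‖ ^ 2 - ‖u (t + 1) - y‖ ^ 2) +
          R / 2 * (‖g t‖ ^ 2 / √(2 * S (t + 1)))) := sum_le_sum fun t _ => hstep t
    _ = ∑ t ∈ range T, A (t + 1) * (‖u t - y‖ ^ 2 - ‖u (t + 1) - y‖ ^ 2) +
          R / 2 * ∑ t ∈ range T, ‖g t‖ ^ 2 / √(2 * S (t + 1)) := by
        rw [sum_add_distrib, mul_sum]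
    _ ≤ A T * R ^ 2 + R / 2 * √(2 * S T) := by
        have htel := sum_range_mul_sub_succ_add_le hA (by positivity)
          (fun t => pow_le_pow_left₀ (norm_nonneg _) (hdist t) 2) T
        have hsqrt := sum_range_div_sqrt_two_mul_le (fun t => sq_nonneg ‖g t‖) T
        have : 0 ≤ A T * ‖u T - y‖ ^ 2 := by positivity
        gcongr ?_ + R / 2 * ?_
        linarith
    _ = R * √(2 * S T) := by
        simp only [A]
        field_simp
        ring

end InnerProductSpace

theorem stmt8_general {d : ℕ} (D : Set (EuclideanSpace ℝ (Fin d)))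
    (hDconv : Convex ℝ D) (hDcomp : IsCompact D)
    (T : ℕ) (h : ℕ → EuclideanSpace ℝ (Fin d) → ℝ)
    (gradh : ℕ → EuclideanSpace ℝ (Fin d) → EuclideanSpace ℝ (Fin d))
    (U : Set (EuclideanSpace ℝ (Fin d))) (hDU : D ⊆ U)
    (hconv : ∀ t, ConvexOn ℝ D (h t))
    (hgrad : ∀ t, ∀ x ∈ U, HasGradientAt (h t) (gradh t x) x)
    (proj : EuclideanSpace ℝ (Fin d) → EuclideanSpace ℝ (Fin d))
    (hproj : ∀ v, proj v ∈ D ∧ ∀ u ∈ D, ‖proj v - v‖ ≤ ‖u - v‖)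
    (u : ℕ → EuclideanSpace ℝ (Fin d)) (hu0 : u 0 ∈ D)
    (hupdate : ∀ t, u (t + 1) =
      proj (u t - (Metric.diam D / Real.sqrt (2 * ∑ s ∈ range (t + 1), ‖gradh s (u s)‖ ^ 2)) •
        gradh t (u t)))
    (ustar : EuclideanSpace ℝ (Fin d)) (hstar : ustar ∈ D) :
    ∑ t ∈ range T, (h t (u t) - h t ustar) ≤
      Metric.diam D * Real.sqrt (2 * ∑ t ∈ range T, ‖gradh t (u t)‖ ^ 2) := by
  have hmem : ∀ t, u t ∈ D
    | 0 => hu0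
    | t + 1 => hupdate t ▸ (hproj _).1
  calc ∑ t ∈ range T, (h t (u t) - h t ustar)
      ≤ ∑ t ∈ range T, ⟪gradh t (u t), u t - ustar⟫ := sum_le_sum fun t _ => by
        have hgrad_ineq := (hconv t).inner_gradient_le_sub (hmem t) hstar
          (hgrad t _ (hDU (hmem t)))
        rw [← neg_sub, inner_neg_right] at hgrad_ineq
        linarith
    _ ≤ Metric.diam D * √(2 * ∑ t ∈ range T, ‖gradh t (u t)‖ ^ 2) :=
        adagrad_inner_regret_le hDconv hDcomp.isBounded (fun v => (hproj v).2) hmem hupdate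
          hstar T

/-- AdaGrad regret bound: for convex differentiable `h₁,…,h_T` on a compact convex set `D`
with diameter `R_D`, the projected AdaGrad iterates with stepsize
`γ_t = R_D (2 Σ_{s≤t} ‖∇h_s(u_s)‖²)^{−1/2}` satisfy
`Σ_t (h_t(u_t) − h_t(u*)) ≤ R_D √(2 Σ_t ‖∇h_t(u_t)‖²)` for every `u* ∈ D`. -/
theorem stmt8 {d : ℕ} (D : Set (EuclideanSpace ℝ (Fin d)))
    (hDconv : Convex ℝ D) (hDne : D.Nonempty) (hDcomp : IsCompact D)
    (T : ℕ) (h : ℕ → EuclideanSpace ℝ (Fin d) → ℝ)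
    (gradh : ℕ → EuclideanSpace ℝ (Fin d) → EuclideanSpace ℝ (Fin d))
    (U : Set (EuclideanSpace ℝ (Fin d))) (hU : IsOpen U) (hDU : D ⊆ U)
    (hconv : ∀ t, ConvexOn ℝ D (h t))
    (hgrad : ∀ t, ∀ x ∈ U, HasGradientAt (h t) (gradh t x) x)
    (proj : EuclideanSpace ℝ (Fin d) → EuclideanSpace ℝ (Fin d))
    (hproj : ∀ v, proj v ∈ D ∧ ∀ u ∈ D, ‖proj v - v‖ ≤ ‖u - v‖)
    (u : ℕ → EuclideanSpace ℝ (Fin d)) (hu0 : u 0 ∈ D)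
    (hupdate : ∀ t, u (t + 1) =
      proj (u t - (Metric.diam D / Real.sqrt (2 * ∑ s ∈ range (t + 1), ‖gradh s (u s)‖ ^ 2)) •
        gradh t (u t)))
    (ustar : EuclideanSpace ℝ (Fin d)) (hstar : ustar ∈ D) :
    ∑ t ∈ range T, (h t (u t) - h t ustar) ≤
      Metric.diam D * Real.sqrt (2 * ∑ t ∈ range T, ‖gradh t (u t)‖ ^ 2) :=
  stmt8_general D hDconv hDcomp T h gradh U hDU hconv hgrad proj hproj u hu0 hupdate ustar hstar
end

section
/- Let h_t(λ) = ‖g_t + λ d_t‖² for λ ∈ [0,1], where ‖g_t‖ ≤ G and ‖d_t‖ ≤ 2G for all t. Then the derivative satisfies |h_t'(λ)|² ≤ 16 G² h_t(λ) for all λ, and consequently any algorithm with second-order regret bound R_T ≤ √(2 Σ_t |h_t'(λ_t)|²) on [0,1] satisfies R_T ≤ 128 G² + 8G √(2 Σ_{t=1}^T h_t(λ*)) for any λ* ∈ [0,1]. -/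
open Finset

/-!
`h'(λ) = 2⟪d, g + λd⟫` is bounded by `2‖d‖ √h(λ)` (Cauchy–Schwarz), so `|h'|² ≤ 16G² h`.
Summing, the second-order bound gives the self-bounding inequality `R ≤ √(32G² (B + R))`,
where `B = Σ_t h_t(λ*)` and `R + B = Σ_t h_t(λ_t)`; solving this quadratic inequality in `R`
yields `R ≤ 32G² + 4G√(2B)`.
-/

lemma sq_two_inner_le_of_norm_le {E : Type*} [NormedAddCommGroup E] [InnerProductSpace ℝ E]
    {G : ℝ} {d : E} (hd : ‖d‖ ≤ 2 * G) (v : E) :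
    (2 * inner ℝ d v) ^ 2 ≤ 16 * G ^ 2 * ‖v‖ ^ 2 := by
  have hinner : |inner ℝ d v| ≤ 2 * G * ‖v‖ :=
    (abs_real_inner_le_norm d v).trans (mul_le_mul_of_nonneg_right hd (norm_nonneg v))
  calc (2 * inner ℝ d v) ^ 2 = 4 * |inner ℝ d v| ^ 2 := by rw [sq_abs]; ring
    _ ≤ 4 * (2 * G * ‖v‖) ^ 2 := by gcongr
    _ = 16 * G ^ 2 * ‖v‖ ^ 2 := by ring

lemma le_add_sqrt_mul_of_le_sqrt_mul_add {a b x : ℝ} (ha : 0 ≤ a) (hb : 0 ≤ b)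
    (h : x ≤ √(a * (b + x))) : x ≤ a + √(a * b) := by
  have hs : 0 ≤ √(a * b) := Real.sqrt_nonneg _
  rcases le_or_gt x 0 with hx | hx
  · linarith
  have hsq : x ^ 2 ≤ a * (b + x) := (Real.le_sqrt' hx).mp h
  have hs2 : √(a * b) ^ 2 = a * b := Real.sq_sqrt (mul_nonneg ha hb)
  nlinarith

theorem stmt9_general {d : ℕ} (G : ℝ) (hG : 0 < G) (T : ℕ)
    (g dv : ℕ → EuclideanSpace ℝ (Fin d))
    (hd : ∀ t, ‖dv t‖ ≤ 2 * G)
    (lam : ℕ → ℝ)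
    (lamstar : ℝ) :
    (∀ (t : ℕ) (l : ℝ),
      (2 * (inner ℝ (dv t) (g t + l • dv t) : ℝ)) ^ 2 ≤ 16 * G ^ 2 * ‖g t + l • dv t‖ ^ 2) ∧
    ((∑ t ∈ range T, ‖g t + lam t • dv t‖ ^ 2) - (∑ t ∈ range T, ‖g t + lamstar • dv t‖ ^ 2) ≤
        Real.sqrt (2 * ∑ t ∈ range T, (2 * (inner ℝ (dv t) (g t + lam t • dv t) : ℝ)) ^ 2) →
      (∑ t ∈ range T, ‖g t + lam t • dv t‖ ^ 2) - (∑ t ∈ range T, ‖g t + lamstar • dv t‖ ^ 2) ≤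
        128 * G ^ 2 + 8 * G * Real.sqrt (2 * ∑ t ∈ range T, ‖g t + lamstar • dv t‖ ^ 2)) := by
  have hderiv : ∀ (t : ℕ) (l : ℝ),
      (2 * (inner ℝ (dv t) (g t + l • dv t) : ℝ)) ^ 2 ≤ 16 * G ^ 2 * ‖g t + l • dv t‖ ^ 2 :=
    fun t l => sq_two_inner_le_of_norm_le (hd t) _
  refine ⟨hderiv, fun hregret => ?_⟩
  set A := ∑ t ∈ range T, ‖g t + lam t • dv t‖ ^ 2
  set B := ∑ t ∈ range T, ‖g t + lamstar • dv t‖ ^ 2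
  have hB : 0 ≤ B := sum_nonneg fun t _ => sq_nonneg _
  have hsum : ∑ t ∈ range T, (2 * (inner ℝ (dv t) (g t + lam t • dv t) : ℝ)) ^ 2
      ≤ 16 * G ^ 2 * A := by
    rw [mul_sum]
    exact sum_le_sum fun t _ => hderiv t (lam t)
  have hself : A - B ≤ √(32 * G ^ 2 * (B + (A - B))) :=
    hregret.trans (Real.sqrt_le_sqrt (by linarith))
  have hsolved := le_add_sqrt_mul_of_le_sqrt_mul_add (by positivity) hB hself
  have hsqrt : √(32 * G ^ 2 * B) = 4 * G * √(2 * B) := by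
    rw [show 32 * G ^ 2 * B = (4 * G) ^ 2 * (2 * B) by ring, Real.sqrt_mul (by positivity),
      Real.sqrt_sq (by positivity)]
  rw [hsqrt] at hsolved
  linarith [sq_nonneg G, mul_nonneg hG.le (Real.sqrt_nonneg (2 * B))]

/-- For `h_t(λ) = ‖g_t + λd_t‖²` with `‖g_t‖ ≤ G` and `‖d_t‖ ≤ 2G`, the derivative
`h_t'(λ) = 2⟨d_t, g_t + λd_t⟩` satisfies `|h_t'(λ)|² ≤ 16G² h_t(λ)`, and consequently any
algorithm with second-order regret bound `R_T ≤ √(2 Σ_t |h_t'(λ_t)|²)` on `[0,1]` satisfies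
`R_T ≤ 128G² + 8G√(2 Σ_t h_t(λ*))` for any `λ* ∈ [0,1]`. -/
theorem stmt9 {d : ℕ} (G : ℝ) (hG : 0 < G) (T : ℕ)
    (g dv : ℕ → EuclideanSpace ℝ (Fin d))
    (hg : ∀ t, ‖g t‖ ≤ G) (hd : ∀ t, ‖dv t‖ ≤ 2 * G)
    (lam : ℕ → ℝ) (hlam : ∀ t, lam t ∈ Set.Icc (0 : ℝ) 1)
    (lamstar : ℝ) (hstar : lamstar ∈ Set.Icc (0 : ℝ) 1) :
    (∀ (t : ℕ) (l : ℝ),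
      (2 * (inner ℝ (dv t) (g t + l • dv t) : ℝ)) ^ 2 ≤ 16 * G ^ 2 * ‖g t + l • dv t‖ ^ 2) ∧
    ((∑ t ∈ range T, ‖g t + lam t • dv t‖ ^ 2) - (∑ t ∈ range T, ‖g t + lamstar • dv t‖ ^ 2) ≤
        Real.sqrt (2 * ∑ t ∈ range T, (2 * (inner ℝ (dv t) (g t + lam t • dv t) : ℝ)) ^ 2) →
      (∑ t ∈ range T, ‖g t + lam t • dv t‖ ^ 2) - (∑ t ∈ range T, ‖g t + lamstar • dv t‖ ^ 2) ≤
        128 * G ^ 2 + 8 * G * Real.sqrt (2 * ∑ t ∈ range T, ‖g t + lamstar • dv t‖ ^ 2)) :=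
  stmt9_general G hG T g dv hd lam lamstar
end

section
/- Let L : ℝ^d → ℝ be β-smooth and M-bounded (|L(w)| ≤ M for all w). The AdaGrad-Norm iterates w_{t+1} = w_t − η_t g_t with η_t = η_0 (Σ_{s=1}^t ‖g_s‖²)^{−1/2} satisfy Σ_{t=1}^T ‖∇L(w_t)‖² ≤ (2M/η_0 + η_0 β) √(Σ_{t=1}^T ‖g_t‖²) + Σ_{t=1}^T ⟨∇L(w_t) − g_t, ∇L(w_t)⟩. -/
/-!
With `b t = √(∑_{s<t} ‖g s‖²)`, the update is a gradient-type step of size `η₀ / b (t+1)`, so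
`β`-smoothness gives `⟪∇L(w_t), g_t⟫ ≤ (L(w_t) − L(w_{t+1})) b_{t+1} / η₀ + (η₀β/2) ‖g_t‖² / b_{t+1}`.
Summing, the first terms are bounded by Abel summation (`b` is nondecreasing and `L ≤ M`) by
`2M b_T / η₀`, and the second by `η₀β b_T`, since `‖g_t‖² / b_{t+1} ≤ 2(b_{t+1} − b_t)`.
Finally `‖∇L(w_t)‖² = ⟪∇L(w_t) − g_t, ∇L(w_t)⟫ + ⟪∇L(w_t), g_t⟫`.
-/

open Finset

lemma sub_div_sqrt_le_two_mul_sqrt_sub {x y : ℝ} (hx : 0 ≤ x) (hxy : x ≤ y) :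
    (y - x) / √y ≤ 2 * (√y - √x) := by
  have hsqrt : √x ≤ √y := Real.sqrt_le_sqrt hxy
  rcases (Real.sqrt_nonneg y).eq_or_lt with hy | hy
  · rw [← hy, div_zero]
    linarith
  · rw [div_le_iff₀ hy]
    nlinarith [Real.sq_sqrt hx, Real.sq_sqrt (hx.trans hxy), Real.sqrt_nonneg x]

lemma sum_div_sqrt_partial_sum_le (a : ℕ → ℝ) (ha : ∀ t, 0 ≤ a t) (N : ℕ) :
    ∑ t ∈ range N, a t / √(∑ s ∈ range (t + 1), a s) ≤ 2 * √(∑ s ∈ range N, a s) := by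
  have hterm : ∀ t, a t / √(∑ s ∈ range (t + 1), a s) ≤
      2 * (√(∑ s ∈ range (t + 1), a s) - √(∑ s ∈ range t, a s)) := fun t => by
    have h := sub_div_sqrt_le_two_mul_sqrt_sub (sum_nonneg fun s _ => ha s)
      (sum_le_sum_of_subset_of_nonneg (range_subset_range.2 t.le_succ) fun s _ _ => ha s)
    rwa [sum_range_succ, add_sub_cancel_left, ← sum_range_succ] at h
  calc _ ≤ ∑ t ∈ range N, 2 * (√(∑ s ∈ range (t + 1), a s) - √(∑ s ∈ range t, a s)) :=
        sum_le_sum fun t _ => hterm t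
    _ = 2 * √(∑ s ∈ range N, a s) := by
        rw [← mul_sum, sum_range_sub (fun t => √(∑ s ∈ range t, a s))]
        simp

lemma sum_range_sub_mul_le_of_monotone {f b : ℕ → ℝ} {M : ℝ} (hf : ∀ t, f t ≤ M)
    (hb0 : 0 ≤ b 0) (hb : Monotone b) (N : ℕ) :
    ∑ t ∈ range N, (f t - f (t + 1)) * b (t + 1) ≤ (M - f N) * b N := by
  induction N with
  | zero => simpa using mul_nonneg (sub_nonneg.2 (hf 0)) hb0
  | succ N ih =>
    have : (M - f N) * b N ≤ (M - f N) * b (N + 1) :=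
      mul_le_mul_of_nonneg_left (hb N.le_succ) (sub_nonneg.2 (hf N))
    rw [sum_range_succ]
    linarith

section Smooth

variable {E : Type*} [NormedAddCommGroup E] [InnerProductSpace ℝ E]
  {L : E → ℝ} {gradL : E → E} {β : ℝ}

lemma inner_grad_le_of_smooth_step
    (hsmooth : ∀ u w, L u ≤ L w + (inner ℝ (gradL w) (u - w) : ℝ) + β / 2 * ‖u - w‖ ^ 2)
    {η0 b : ℝ} (hη : 0 < η0) (hb : 0 ≤ b) (x v : E) (hv : ‖v‖ ^ 2 ≤ b ^ 2) :
    inner ℝ (gradL x) v ≤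
      (L x - L (x - (η0 / b) • v)) * b / η0 + η0 * β / 2 * (‖v‖ ^ 2 / b) := by
  rcases hb.eq_or_lt with rfl | hbpos
  -- at `b = 0` both divisions are the junk value `0`, and `hv` forces `v = 0`
  · obtain rfl : v = 0 := norm_eq_zero.1 (by nlinarith [norm_nonneg v])
    simp
  · set c := η0 / b with hc_def
    have hc : 0 < c := div_pos hη hbpos
    have hdesc := hsmooth (x - c • v) x
    rw [sub_sub_cancel_left, inner_neg_right, inner_smul_right, norm_neg, norm_smul,
      Real.norm_eq_abs, abs_of_pos hc] at hdesc
    have hrhs : (L x - L (x - c • v)) * b / η0 + η0 * β / 2 * (‖v‖ ^ 2 / b) =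
        (L x - L (x - c • v) + β / 2 * (c * ‖v‖) ^ 2) / c := by
      rw [hc_def]; field_simp
    rw [hrhs, le_div_iff₀ hc]
    linarith

lemma sum_inner_grad_le_of_adagradNorm
    (hsmooth : ∀ u w, L u ≤ L w + (inner ℝ (gradL w) (u - w) : ℝ) + β / 2 * ‖u - w‖ ^ 2)
    (hβ : 0 ≤ β) {M η0 : ℝ} (hη : 0 < η0) (hbound : ∀ w, |L w| ≤ M)
    (T : ℕ) (g w : ℕ → E)
    (hupdate : ∀ t, w (t + 1) = w t - (η0 / √(∑ s ∈ range (t + 1), ‖g s‖ ^ 2)) • g t) :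
    ∑ t ∈ range T, inner ℝ (gradL (w t)) (g t) ≤
      (2 * M / η0 + η0 * β) * √(∑ t ∈ range T, ‖g t‖ ^ 2) := by
  set b : ℕ → ℝ := fun t => √(∑ s ∈ range t, ‖g s‖ ^ 2)
  have hb : Monotone b := fun m n hmn => Real.sqrt_le_sqrt <|
    sum_le_sum_of_subset_of_nonneg (range_subset_range.2 hmn) fun s _ _ => sq_nonneg _
  have hstep : ∀ t, inner ℝ (gradL (w t)) (g t) ≤
      (L (w t) - L (w (t + 1))) * b (t + 1) / η0 + η0 * β / 2 * (‖g t‖ ^ 2 / b (t + 1)) :=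
    fun t => by
      rw [hupdate t]
      refine inner_grad_le_of_smooth_step hsmooth hη (Real.sqrt_nonneg _) _ _ ?_
      rw [Real.sq_sqrt (sum_nonneg fun s _ => sq_nonneg _)]
      exact single_le_sum (fun s _ => sq_nonneg ‖g s‖) (self_mem_range_succ t)
  have habel := sum_range_sub_mul_le_of_monotone (fun t => (le_abs_self _).trans (hbound (w t)))
    (Real.sqrt_nonneg _) hb T
  have hsq := sum_div_sqrt_partial_sum_le (fun t => ‖g t‖ ^ 2) (fun t => sq_nonneg _) T
  have hLT : M - L (w T) ≤ 2 * M := by linarith [neg_abs_le (L (w T)), hbound (w T)]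
  calc _ ≤ ∑ t ∈ range T, ((L (w t) - L (w (t + 1))) * b (t + 1) / η0 +
          η0 * β / 2 * (‖g t‖ ^ 2 / b (t + 1))) := sum_le_sum fun t _ => hstep t
    _ = (∑ t ∈ range T, (L (w t) - L (w (t + 1))) * b (t + 1)) / η0 +
          η0 * β / 2 * ∑ t ∈ range T, ‖g t‖ ^ 2 / b (t + 1) := by
        rw [sum_add_distrib, sum_div, mul_sum]
    _ ≤ 2 * M * b T / η0 + η0 * β / 2 * (2 * b T) := by
        gcongr
        exact habel.trans (mul_le_mul_of_nonneg_right hLT (Real.sqrt_nonneg _))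
    _ = (2 * M / η0 + η0 * β) * b T := by ring

end Smooth

theorem stmt11_general {E : Type*} [NormedAddCommGroup E] [InnerProductSpace ℝ E]
    (L : E → ℝ) (gradL : E → E) (β M η0 : ℝ)
    (hβ : 0 < β) (hη : 0 < η0)
    (hsmooth : ∀ u w, L u ≤ L w + (inner ℝ (gradL w) (u - w) : ℝ) + β / 2 * ‖u - w‖ ^ 2)
    (hbound : ∀ w, |L w| ≤ M)
    (T : ℕ) (g : ℕ → E) (w : ℕ → E)
    (hupdate : ∀ t, w (t + 1) =
      w t - (η0 / Real.sqrt (∑ s ∈ range (t + 1), ‖g s‖ ^ 2)) • g t) :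
    ∑ t ∈ range T, ‖gradL (w t)‖ ^ 2 ≤
      (2 * M / η0 + η0 * β) * Real.sqrt (∑ t ∈ range T, ‖g t‖ ^ 2) +
        ∑ t ∈ range T, (inner ℝ (gradL (w t) - g t) (gradL (w t)) : ℝ) := by
  have hinner : ∀ t, ‖gradL (w t)‖ ^ 2 =
      inner ℝ (gradL (w t) - g t) (gradL (w t)) + inner ℝ (gradL (w t)) (g t) := fun t => by
    rw [inner_sub_left, real_inner_self_eq_norm_sq, real_inner_comm]
    ring
  have hcore := sum_inner_grad_le_of_adagradNorm hsmooth hβ.le hη hbound T g w hupdate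
  rw [sum_congr rfl fun t _ => hinner t, sum_add_distrib]
  linarith

/-- For a `β`-smooth and `M`-bounded objective `L`, the AdaGrad-Norm iterates
`w_{t+1} = w_t − η_t g_t` with `η_t = η₀(Σ_{s≤t}‖g_s‖²)^{−1/2}` satisfy
`Σ_t ‖∇L(w_t)‖² ≤ (2M/η₀ + η₀β)√(Σ_t ‖g_t‖²) + Σ_t ⟨∇L(w_t) − g_t, ∇L(w_t)⟩`. -/
theorem stmt11 {E : Type*} [NormedAddCommGroup E] [InnerProductSpace ℝ E] [CompleteSpace E]
    (L : E → ℝ) (gradL : E → E) (β M η0 : ℝ)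
    (hβ : 0 < β) (hM : 0 < M) (hη : 0 < η0)
    (hgrad : ∀ x, HasGradientAt L (gradL x) x)
    (hsmooth : ∀ u w, L u ≤ L w + (inner ℝ (gradL w) (u - w) : ℝ) + β / 2 * ‖u - w‖ ^ 2)
    (hbound : ∀ w, |L w| ≤ M)
    (T : ℕ) (g : ℕ → E) (w : ℕ → E)
    (hupdate : ∀ t, w (t + 1) =
      w t - (η0 / Real.sqrt (∑ s ∈ range (t + 1), ‖g s‖ ^ 2)) • g t) :
    ∑ t ∈ range T, ‖gradL (w t)‖ ^ 2 ≤
      (2 * M / η0 + η0 * β) * Real.sqrt (∑ t ∈ range T, ‖g t‖ ^ 2) +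
        ∑ t ∈ range T, (inner ℝ (gradL (w t) - g t) (gradL (w t)) : ℝ) :=
  stmt11_general L gradL β M η0 hβ hη hsmooth hbound T g w hupdate
end

section
/- In the linear regression setting with feature–residual independence, the PPI++ optimal interpolation parameter simplifies to λ*_{PPI++} = (1/(1+r)) · Cov(ε, ε_f)/Var(ε_f). -/
open MeasureTheory ProbabilityTheory

/-- Covariance of two real random variables. -/
noncomputable def covR {Ω : Type*} [MeasurableSpace Ω] (μ : Measure Ω) (u v : Ω → ℝ) : ℝ :=
  ∫ ω, (u ω - ∫ ω', u ω' ∂μ) * (v ω - ∫ ω', v ω' ∂μ) ∂μ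

/-!
Independence of the features from the centred residuals kills the means `E[x ε] = E[x] E[ε] = 0`
and factorises every gradient covariance as `Cov(-x ε, -x ε') = E[x xᵀ] · Cov(ε, ε')`, so the
three covariance matrices in `λ*_{PP}` are scalar multiples of `H = Σ_x`.
Both traces then reduce to multiples of `Tr H⁻¹ > 0`, which cancels.
-/

section Covariance

variable {Ω : Type*} [MeasurableSpace Ω] {μ : Measure Ω}

lemma covR_comm (u v : Ω → ℝ) : covR μ u v = covR μ v u := by
  simp only [covR, mul_comm]

lemma covR_neg_neg (u v : Ω → ℝ) :
    covR μ (fun ω => -u ω) (fun ω => -v ω) = covR μ u v := by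
  simp only [covR, integral_neg]
  congr 1; ext ω; ring

lemma covR_eq_integral_mul {u v : Ω → ℝ} (hu : ∫ ω, u ω ∂μ = 0) (hv : ∫ ω, v ω ∂μ = 0) :
    covR μ u v = ∫ ω, u ω * v ω ∂μ := by
  simp only [covR, hu, hv, sub_zero]

lemma covR_mul_mul_of_indepFun {E : Type*} [MeasurableSpace E] {X : Ω → E} {e e' : Ω → ℝ}
    (hX : Measurable X) (he : Measurable e) (he' : Measurable e')
    (hindep : IndepFun X (fun ω => (e ω, e' ω)) μ)
    (he0 : ∫ ω, e ω ∂μ = 0) (he'0 : ∫ ω, e' ω ∂μ = 0)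
    {a b : E → ℝ} (ha : Measurable a) (hb : Measurable b) :
    covR μ (fun ω => a (X ω) * e ω) (fun ω => b (X ω) * e' ω) =
      (∫ ω, a (X ω) * b (X ω) ∂μ) * covR μ e e' := by
  have hcentred : ∀ {c : E → ℝ} {g : ℝ × ℝ → ℝ}, Measurable c → Measurable g →
      ∫ ω, g (e ω, e' ω) ∂μ = 0 → ∫ ω, c (X ω) * g (e ω, e' ω) ∂μ = 0 := fun hc hg hg0 => by
    have h := (hindep.comp hc hg).integral_fun_mul_eq_mul_integral
      (hc.comp hX).aestronglyMeasurable (hg.comp (he.prodMk he')).aestronglyMeasurable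
    simpa only [Function.comp_def, hg0, mul_zero] using h
  rw [covR_eq_integral_mul (hcentred ha measurable_fst he0) (hcentred hb measurable_snd he'0),
    covR_eq_integral_mul he0 he'0]
  calc ∫ ω, a (X ω) * e ω * (b (X ω) * e' ω) ∂μ
      = ∫ ω, (a (X ω) * b (X ω)) * (e ω * e' ω) ∂μ := by congr 1; ext ω; ring
    _ = (∫ ω, a (X ω) * b (X ω) ∂μ) * ∫ ω, e ω * e' ω ∂μ :=
      (hindep.comp (ha.mul hb) (measurable_fst.mul measurable_snd)).integral_fun_mul_eq_mul_integral
        ((ha.mul hb).comp hX).aestronglyMeasurable (he.mul he').aestronglyMeasurable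

lemma covR_neg_mul_neg_mul_of_indepFun {ι : Type*} {x : Ω → ι → ℝ} {e e' : Ω → ℝ}
    (hx : Measurable x) (he : Measurable e) (he' : Measurable e')
    (hindep : IndepFun x (fun ω => (e ω, e' ω)) μ)
    (he0 : ∫ ω, e ω ∂μ = 0) (he'0 : ∫ ω, e' ω ∂μ = 0) (i j : ι) :
    covR μ (fun ω => -(x ω i * e ω)) (fun ω => -(x ω j * e' ω)) =
      covR μ e e' * ∫ ω, x ω i * x ω j ∂μ := by
  rw [covR_neg_neg, covR_mul_mul_of_indepFun hx he he' hindep he0 he'0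
    (measurable_pi_apply i) (measurable_pi_apply j), mul_comm]

end Covariance

lemma Matrix.trace_inv_mul_smul_mul_inv {n : Type*} [Fintype n] [DecidableEq n]
    {S : Matrix n n ℝ} (hS : IsUnit S.det) (c : ℝ) :
    (S⁻¹ * (c • S) * S⁻¹).trace = c * S⁻¹.trace := by
  rw [Matrix.mul_smul, Matrix.smul_mul, Matrix.nonsing_inv_mul S hS, Matrix.one_mul,
    Matrix.trace_smul, smul_eq_mul]

theorem stmt15_general {Ω : Type*} [MeasurableSpace Ω] (μ : Measure Ω)
    {d : ℕ} (hd : 0 < d) (x : Ω → Fin d → ℝ) (ε εf : Ω → ℝ) (r : ℝ)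
    (hmx : Measurable x) (hmε : Measurable ε) (hmεf : Measurable εf)
    (hindep : IndepFun x (fun ω => (ε ω, εf ω)) μ)
    (hε0 : ∫ ω, ε ω ∂μ = 0) (hεf0 : ∫ ω, εf ω ∂μ = 0)
    (Sx : Matrix (Fin d) (Fin d) ℝ)
    (hSx : ∀ i j, Sx i j = ∫ ω, x ω i * x ω j ∂μ)
    (hpd : Sx.PosDef)
    (Clf Cfl Cf : Matrix (Fin d) (Fin d) ℝ)
    (hClf : ∀ i j, Clf i j = covR μ (fun ω => -(x ω i * ε ω)) (fun ω => -(x ω j * εf ω)))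
    (hCfl : ∀ i j, Cfl i j = covR μ (fun ω => -(x ω i * εf ω)) (fun ω => -(x ω j * ε ω)))
    (hCf : ∀ i j, Cf i j = covR μ (fun ω => -(x ω i * εf ω)) (fun ω => -(x ω j * εf ω))) :
    (Sx⁻¹ * (Clf + Cfl) * Sx⁻¹).trace / (2 * (1 + r) * (Sx⁻¹ * Cf * Sx⁻¹).trace) =
      (1 / (1 + r)) * (covR μ ε εf / covR μ εf εf) := by
  have hgrad : ∀ {e e' : Ω → ℝ}, Measurable e → Measurable e' →
      IndepFun x (fun ω => (e ω, e' ω)) μ → ∫ ω, e ω ∂μ = 0 → ∫ ω, e' ω ∂μ = 0 →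
      ∀ i j, covR μ (fun ω => -(x ω i * e ω)) (fun ω => -(x ω j * e' ω)) = (covR μ e e' • Sx) i j :=
    fun he he' hind he0 he'0 i j => by
      rw [covR_neg_mul_neg_mul_of_indepFun hmx he he' hind he0 he'0, Matrix.smul_apply, hSx,
        smul_eq_mul]
  have hClf' : Clf = covR μ ε εf • Sx := Matrix.ext fun i j => by
    rw [hClf, hgrad hmε hmεf hindep hε0 hεf0]
  have hCfl' : Cfl = covR μ ε εf • Sx := Matrix.ext fun i j => by
    rw [hCfl, hgrad hmεf hmε (hindep.comp measurable_id measurable_swap) hεf0 hε0, covR_comm]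
  have hCf' : Cf = covR μ εf εf • Sx := Matrix.ext fun i j => by
    rw [hCf, hgrad hmεf hmεf (hindep.comp measurable_id (measurable_snd.prodMk measurable_snd))
      hεf0 hεf0]
  have hunit : IsUnit Sx.det := hpd.isUnit.map Matrix.detMonoidHom
  have := Fin.pos_iff_nonempty.mp hd
  have htr : Sx⁻¹.trace ≠ 0 := hpd.inv.trace_pos.ne'
  rw [hClf', hCfl', hCf', ← add_smul, Matrix.trace_inv_mul_smul_mul_inv hunit,
    Matrix.trace_inv_mul_smul_mul_inv hunit, ← mul_assoc, mul_div_mul_right _ _ htr]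
  rw [div_eq_mul_inv, mul_inv, mul_inv]
  ring

/-- In linear regression with squared loss and feature–residual independence, the PPI++
optimal interpolation parameter
`λ*_{PP} = Tr(H⁻¹(Cov(∇ℓ,∇ℓ^f) + Cov(∇ℓ^f,∇ℓ))H⁻¹) / (2(1+r)Tr(H⁻¹ Cov(∇ℓ^f) H⁻¹))`
(with `H = Σ_x`) simplifies to `(1/(1+r)) · Cov(ε, ε_f)/Var(ε_f)`. -/
theorem stmt15 {Ω : Type*} [MeasurableSpace Ω] (μ : Measure Ω) [IsProbabilityMeasure μ]
    {d : ℕ} (hd : 0 < d) (x : Ω → Fin d → ℝ) (ε εf : Ω → ℝ) (r : ℝ) (hr : 0 < r)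
    (hmx : Measurable x) (hmε : Measurable ε) (hmεf : Measurable εf)
    (hindep : IndepFun x (fun ω => (ε ω, εf ω)) μ)
    (hε0 : ∫ ω, ε ω ∂μ = 0) (hεf0 : ∫ ω, εf ω ∂μ = 0)
    (hεεf : Integrable (fun ω => ε ω * εf ω) μ)
    (hεf2 : Integrable (fun ω => εf ω * εf ω) μ)
    (hε1 : Integrable ε μ) (hεf1 : Integrable εf μ) (hx1 : ∀ i, Integrable (fun ω => x ω i) μ)
    (hx2 : ∀ i j, Integrable (fun ω => x ω i * x ω j) μ)
    (hprod1 : ∀ i j, Integrable (fun ω => x ω i * x ω j * (ε ω * εf ω)) μ)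
    (hprod2 : ∀ i j, Integrable (fun ω => x ω i * x ω j * (εf ω * εf ω)) μ)
    (Sx : Matrix (Fin d) (Fin d) ℝ)
    (hSx : ∀ i j, Sx i j = ∫ ω, x ω i * x ω j ∂μ)
    (hpd : Sx.PosDef)
    (Clf Cfl Cf : Matrix (Fin d) (Fin d) ℝ)
    (hClf : ∀ i j, Clf i j = covR μ (fun ω => -(x ω i * ε ω)) (fun ω => -(x ω j * εf ω)))
    (hCfl : ∀ i j, Cfl i j = covR μ (fun ω => -(x ω i * εf ω)) (fun ω => -(x ω j * ε ω)))
    (hCf : ∀ i j, Cf i j = covR μ (fun ω => -(x ω i * εf ω)) (fun ω => -(x ω j * εf ω)))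
    (hv : 0 < covR μ εf εf) :
    (Sx⁻¹ * (Clf + Cfl) * Sx⁻¹).trace / (2 * (1 + r) * (Sx⁻¹ * Cf * Sx⁻¹).trace) =
      (1 / (1 + r)) * (covR μ ε εf / covR μ εf εf) :=
  stmt15_general μ hd x ε εf r hmx hmε hmεf hindep hε0 hεf0 Sx hSx hpd Clf Cfl Cf hClf hCfl hCf
end
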